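/- arXiv:1409.3711 — 9 statements merged into one kernel-verified Lean document; each statement's English description precedes it below -/
import Mathlib

section
/- Let (V, *) be a simple travel groupoid and k ≥ 1. For x, y ∈ V, if x *^{k-1} y ≠ y and x *^k y = y, then y *^{k-1} x ≠ x and y *^j x = x *^{k-j} y for all 0 ≤ j ≤ k. -/
def iter {V : Type*} (op : V → V → V) (u v : V) : ℕ → V
  | 0 => u
  | i + 1 => op (iter op u v i) v

theorem simple_travel_groupoid_reverse {V : Type*} (op : V → V → V)
    (t1 : ∀ u v : V, op (op u v) u = u)
    (t2 : ∀ u v : V, op (op u v) v = u → u = v)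
    (t3 : ∀ u v : V, op v u ≠ u → op u (op v u) = op u v)
    (k : ℕ) (hk : 1 ≤ k) (x y : V)
    (h1 : iter op x y (k - 1) ≠ y) (h2 : iter op x y k = y) :
    iter op y x (k - 1) ≠ x ∧ ∀ j ≤ k, iter op y x j = iter op x y (k - j) := by
  set a : ℕ → V := fun i => iter op x y i with ha
  -- basic facts
  have astep : ∀ i, a (i + 1) = op (a i) y := fun i => rfl
  have selfop : ∀ u : V, op u u = u := by
    intro u
    apply t2 (op u u) u
    rw [t1]
  have iter_add : ∀ m t : ℕ, iter op x y (m + t) = iter op (iter op x y m) y t := by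
    intro m t
    induction t with
    | zero => rfl
    | succ t ih => show op (iter op x y (m + t)) y = _; rw [ih]; rfl
  have iter_self : ∀ t : ℕ, iter op y y t = y := by
    intro t
    induction t with
    | zero => rfl
    | succ t ih => show op (iter op y y t) y = y; rw [ih, selfop]
  have hny : ∀ i, i < k → a i ≠ y := by
    intro i hik hiy
    apply h1
    have : k - 1 = i + (k - 1 - i) := by omega
    rw [this]
    show iter op x y (i + (k - 1 - i)) = y
    rw [iter_add]
    show iter op (a i) y _ = y
    rw [hiy, iter_self]
  have distinct : ∀ i j, i < j → j ≤ k → a i ≠ a j := by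
    intro i j hij hjk he
    apply hny (i + (k - j)) (by omega)
    show iter op x y (i + (k - j)) = y
    rw [iter_add]
    show iter op (a i) y _ = y
    rw [he]
    show iter op (iter op x y j) y (k - j) = y
    rw [← iter_add]
    have : j + (k - j) = k := by omega
    rw [this, h2]
  -- the backward step lemma, given the forward facts at level i
  have Bpart : ∀ i, 1 ≤ i → i ≤ k →
      (∀ j, j < i → op (a j) (a i) = a (j + 1)) →
      ∀ j, j < i → op (a i) (a j) = a (i - 1) := by
    intro i h1i hik hF
    have inner : ∀ t j, j + 1 + t = i → op (a i) (a j) = a (i - 1) := by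
      intro t
      induction t with
      | zero =>
        intro j hj
        have hji : i = j + 1 := by omega
        subst hji
        have : a (j + 1) = op (a j) y := astep j
        rw [this]
        have : j + 1 - 1 = j := by omega
        rw [this]
        exact t1 (a j) y
      | succ t ih =>
        intro j hj
        have hprev : op (a i) (a (j + 1)) = a (i - 1) := ih (j + 1) (by omega)
        have hf : op (a j) (a i) = a (j + 1) := hF j (by omega)
        have hne : a (j + 1) ≠ a i := distinct (j + 1) i (by omega) hik
        have ht3 := t3 (a i) (a j) (by rw [hf]; exact hne)
        rw [hf] at ht3
        rw [← ht3, hprev]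
    intro j hj
    exact inner (i - 1 - j) j (by omega)
  -- the main double lemma, downward induction on i (via d = k - i)
  have key : ∀ d i, i + d = k →
      (∀ j, j < i → op (a j) (a i) = a (j + 1)) ∧
      (∀ j, j < i → op (a i) (a j) = a (i - 1)) := by
    intro d
    induction d with
    | zero =>
      intro i hi
      have hik : i = k := by omega
      subst hik
      have hF : ∀ j, j < i → op (a j) (a i) = a (j + 1) := by
        intro j _
        show op (a j) (iter op x y i) = a (j + 1)
        rw [h2]
        -- a (j+1) = op (a j) y, and we must show op (a j) y = a (j+1)
        exact (astep j).symm
      exact ⟨hF, Bpart i hk le_rfl hF⟩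
    | succ d ih =>
      intro i hi
      obtain ⟨F1, B1⟩ := ih (i + 1) (by omega)
      have hF : ∀ j, j < i → op (a j) (a i) = a (j + 1) := by
        intro j hj
        have hb : op (a (i + 1)) (a j) = a i := by
          have := B1 j (by omega)
          simpa using this
        have hne : a i ≠ a j := (distinct j i hj (by omega)).symm
        have ht3 := t3 (a j) (a (i + 1)) (by rw [hb]; exact hne)
        rw [hb] at ht3
        rw [ht3]
        exact F1 j (by omega)
      refine ⟨hF, ?_⟩
      intro j hj
      exact Bpart i (by omega) (by omega) hF j hj
  -- the reverse path
  have main : ∀ j, j ≤ k → iter op y x j = a (k - j) := by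
    intro j
    induction j with
    | zero =>
      intro _
      show y = a k
      exact h2.symm
    | succ j ih =>
      intro hjk
      show op (iter op y x j) x = a (k - (j + 1))
      rw [ih (by omega)]
      have hB := (key j (k - j) (by omega)).2 0 (by omega)
      have hax : a 0 = x := rfl
      rw [← hax]
      have : k - (j + 1) = k - j - 1 := by omega
      rw [this]
      exact hB
  refine ⟨?_, fun j hj => main j hj⟩
  intro hcon
  have := main (k - 1) (by omega)
  rw [hcon] at this
  have h1k : k - (k - 1) = 1 := by omega
  rw [h1k] at this
  exact distinct 0 1 (by omega) hk this
end

section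
/- Every smooth travel groupoid is non-confusing: if (V, *) is a travel groupoid satisfying (t4), then for no pair of distinct u, v ∈ V does there exist i ≥ 3 with u *^i v = u. -/
theorem smooth_is_nonconfusing {V : Type*} (op : V → V → V)
    (t1 : ∀ u v : V, op (op u v) u = u)
    (t2 : ∀ u v : V, op (op u v) v = u → u = v)
    (t4 : ∀ u v w : V, op u v = op u w → op u (op w v) = op u v) :
    ∀ u v : V, u ≠ v → ∀ i : ℕ, 3 ≤ i → iter op u v i ≠ u := by
  intro u v huv i hi hx
  have hb : op (op u v) u = u := t1 u v
  have key : ∀ k, op u (iter op u v (k + 1)) = op u v := by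
    intro k
    induction k with
    | zero =>
      have h2 := t1 (op u v) u
      rw [hb] at h2
      simpa [iter] using h2
    | succ n ih =>
      have h := t4 u v (iter op u v (n + 1)) ih.symm
      simpa [iter] using h
  obtain ⟨j, rfl⟩ : ∃ j, i = j + 2 := ⟨i - 2, by omega⟩
  have h1 : op (iter op u v (j + 1)) v = u := hx
  have h2 := t1 (iter op u v (j + 1)) v
  rw [h1] at h2
  have h3 : iter op u v (j + 1) = op u v := by rw [← h2, key j]
  have h4 : op (op u v) v = u := by rw [← h3]; exact h1
  exact huv (t2 u v h4)
end

section
/- Let (V, *) be a travel groupoid on a graph G (i.e., V = V(G) and the edges of G are exactly the pairs {u, v} with u ≠ v and u * v = v). If (V, *) is non-confusing and V is finite, then G is connected. -/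
theorem iter_shift {V : Type*} (op : V → V → V) (u v : V) (i : ℕ) :
    ∀ k, iter op (iter op u v i) v k = iter op u v (i + k) := by
  intro k
  induction k with
  | zero => rfl
  | succ k ih => simp [iter, ih]

theorem nonconfusing_implies_connected {V : Type*} [Fintype V] [Nonempty V]
    (op : V → V → V) (G : SimpleGraph V)
    (t1 : ∀ u v : V, op (op u v) u = u)
    (t2 : ∀ u v : V, op (op u v) v = u → u = v)
    (hG : ∀ u v : V, G.Adj u v ↔ u ≠ v ∧ op u v = v)
    (hnc : ∀ u v : V, u ≠ v → ∀ i : ℕ, 3 ≤ i → iter op u v i ≠ u) :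
    G.Connected := by
  -- basic lemmas
  have hfix : ∀ u v : V, op u v = u → u = v := by
    intro u v h
    exact t2 u v (by rw [h]; exact h)
  have hstep : ∀ u v : V, op u (op u v) = op u v := by
    intro u v
    have h := t1 (op u v) u
    rw [t1 u v] at h
    exact h
  constructor
  intro u v
  -- first, some n with iter op u v n = v
  have hexists : ∃ n, iter op u v n = v := by
    by_contra hno
    push_neg at hno
    -- pigeonhole on range (card V + 1)
    have hninj : ¬ Function.Injective (fun n : Fin (Fintype.card V + 1) => iter op u v n) := by
      intro hinj
      have := Fintype.card_le_of_injective _ hinj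
      simp at this
    rw [Function.not_injective_iff] at hninj
    obtain ⟨a, b, hab, hne⟩ := hninj
    wlog hlt : (a : ℕ) < (b : ℕ) generalizing a b
    · exact this b a hab.symm hne.symm (by omega : (b : ℕ) < (a : ℕ))
    set w := iter op u v a with hw
    have hwv : w ≠ v := hno a
    have hk : iter op w v (b - a) = w := by
      rw [hw, iter_shift]
      have : (a : ℕ) + (b - a) = b := by omega
      rw [this]
      exact hab.symm
    set k := (b : ℕ) - (a : ℕ) with hkdef
    have hk1 : 1 ≤ k := by omega
    match hkk : k, hk with
    | 1, hk => exact hwv (hfix w v (by simpa [iter] using hk))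
    | 2, hk => exact hwv (t2 w v (by simpa [iter] using hk))
    | (m + 3), hk => exact hnc w v hwv (m + 3) (by omega) hk
  obtain ⟨n, hn⟩ := hexists
  clear hnc
  -- induction: reachability from any point whose iterate hits v
  induction n generalizing u with
  | zero => exact hn ▸ SimpleGraph.Reachable.refl _
  | succ n ih =>
    by_cases huv : u = v
    · exact huv ▸ SimpleGraph.Reachable.refl _
    · have hadj : G.Adj u (op u v) := by
        rw [hG]
        refine ⟨fun h => huv (hfix u v h.symm ▸ rfl), hstep u v⟩
      have : iter op (op u v) v n = v := by
        have := iter_shift op u v 1 n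
        simpa [iter, Nat.add_comm] using this.trans (by rw [Nat.add_comm]; exact hn)
      exact (hadj.reachable).trans (ih (op u v) this)
end

section
/- Let (V, *) be a finite travel groupoid on a graph G. Then (V, *) is non-confusing if and only if for all distinct u, v ∈ V there exists k ≥ 1 such that the sequence u *^0 v, u *^1 v, ..., u *^k v is a u-v path in G (in particular u *^k v = v and all terms are pairwise distinct with consecutive terms adjacent). -/
section aux

variable {V : Type*} (op : V → V → V)

theorem iter_add (u v : V) (i m : ℕ) :
    iter op u v (i + m) = iter op (iter op u v i) v m := by
  induction m with
  | zero => rfl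
  | succ m ih =>
      show op (iter op u v (i + m)) v = op (iter op (iter op u v i) v m) v
      rw [ih]

variable (t1 : ∀ u v : V, op (op u v) u = u)
    (t2 : ∀ u v : V, op (op u v) v = u → u = v)

include t1 t2

theorem op_idem (u : V) : op u u = u := by
  apply t2 (op u u) u
  rw [t1 u u]

theorem op_ne (u v : V) (h : u ≠ v) : op u v ≠ u := by
  intro hc
  apply h
  apply t2 u v
  rw [hc, hc]

theorem op_op (u v : V) : op u (op u v) = op u v := by
  have h1 : op (op u v) u = u := t1 u v
  have h2 := t1 (op u v) u
  rw [h1] at h2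
  exact h2

theorem iter_stab (u v : V) (k i : ℕ) (hk : iter op u v k = v) (hki : k ≤ i) :
    iter op u v i = v := by
  obtain ⟨m, rfl⟩ := Nat.exists_eq_add_of_le hki
  rw [iter_add, hk]
  induction m with
  | zero => rfl
  | succ m ih =>
      show op (iter op v v m) v = v
      rw [ih (by omega), op_idem op t1 t2]

theorem cycle_false
    (NC : ∀ u v : V, u ≠ v → ∀ i : ℕ, 3 ≤ i → iter op u v i ≠ u)
    (u v : V) (huv : u ≠ v) (m : ℕ) (hm : 1 ≤ m) (h : iter op u v m = u) :
    False := by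
  match m with
  | 1 =>
      have h' : op u v = u := h
      exact op_ne op t1 t2 u v huv h'
  | 2 =>
      have h' : op (op u v) v = u := h
      exact huv (t2 u v h')
  | (m + 3) =>
      exact NC u v huv (m + 3) (by omega) h

end aux

theorem nonconfusing_iff_path {V : Type*} [Fintype V]
    (op : V → V → V) (G : SimpleGraph V)
    (t1 : ∀ u v : V, op (op u v) u = u)
    (t2 : ∀ u v : V, op (op u v) v = u → u = v)
    (hG : ∀ u v : V, G.Adj u v ↔ u ≠ v ∧ op u v = v) :
    (∀ u v : V, u ≠ v → ∀ i : ℕ, 3 ≤ i → iter op u v i ≠ u) ↔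
      (∀ u v : V, u ≠ v → ∃ k : ℕ, 1 ≤ k ∧ iter op u v k = v ∧
        (∀ i ≤ k, ∀ j ≤ k, i ≠ j → iter op u v i ≠ iter op u v j) ∧
        (∀ i < k, G.Adj (iter op u v i) (iter op u v (i + 1)))) := by
  constructor
  · intro NC u v huv
    have key : ∀ i j : ℕ, i < j → iter op u v i ≠ v →
        iter op u v i = iter op u v j → False := by
      intro i j hij hiv heq
      have hm : iter op (iter op u v i) v (j - i) = iter op u v i := by
        rw [← iter_add, show i + (j - i) = j by omega, heq]
      exact cycle_false op t1 t2 NC (iter op u v i) v hiv (j - i) (by omega) hm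
    have hex : ∃ k, iter op u v k = v := by
      by_contra hc
      push_neg at hc
      obtain ⟨i, j, hne, heq⟩ :=
        Finite.exists_ne_map_eq_of_infinite (fun n => iter op u v n)
      rcases hne.lt_or_gt with h | h
      · exact key i j h (hc i) heq
      · exact key j i h (hc j) heq.symm
    classical
    set k := Nat.find hex with hkdef
    have hk : iter op u v k = v := Nat.find_spec hex
    have hmin : ∀ i < k, iter op u v i ≠ v := fun i hi => Nat.find_min hex hi
    have hk1 : 1 ≤ k := by
      rcases Nat.eq_zero_or_pos k with h0 | h0
      · exfalso; apply huv; rw [← hk, h0]; rfl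
      · exact h0
    have inj : ∀ i j : ℕ, i < j → j ≤ k →
        iter op u v i = iter op u v j → False := by
      intro i j hij hjk heq
      rcases eq_or_lt_of_le hjk with hj | hj
      · exact hmin i (hj ▸ hij) (by rw [heq, hj, hk])
      · exact key i j hij (hmin i (by omega)) heq
    refine ⟨k, hk1, hk, ?_, ?_⟩
    · intro i hi j hj hne heq
      rcases hne.lt_or_gt with h | h
      · exact inj i j h hj heq
      · exact inj j i h hi heq.symm
    · intro i hik
      have hiv : iter op u v i ≠ v := hmin i hik
      rw [hG]
      refine ⟨?_, ?_⟩
      · exact fun h => op_ne op t1 t2 (iter op u v i) v hiv h.symm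
      · exact op_op op t1 t2 (iter op u v i) v
  · intro H u v huv i hi3 heq
    obtain ⟨k, hk1, hkv, hinj, _⟩ := H u v huv
    rcases le_or_gt i k with h | h
    · exact hinj i h 0 (Nat.zero_le k) (by omega) heq
    · have : iter op u v i = v := iter_stab op t1 t2 u v k i hkv h.le
      exact huv (heq.symm.trans this)
end

section
/- Let T be a finite tree (connected acyclic graph). Define u * v for distinct vertices u, v as the unique neighbor of u on the unique u-v path in T, and u * u = u. Then (V(T), *) is a travel groupoid on T. -/
theorem tree_travel_groupoid {V : Type*} [Fintype V]
    (T : SimpleGraph V) (hT : T.IsTree) (op : V → V → V)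
    (hdiag : ∀ u : V, op u u = u)
    (hstep : ∀ u v : V, u ≠ v →
      T.Adj u (op u v) ∧ T.dist (op u v) v + 1 = T.dist u v) :
    (∀ u v : V, op (op u v) u = u) ∧
    (∀ u v : V, op (op u v) v = u → u = v) ∧
    (∀ u v : V, T.Adj u v ↔ u ≠ v ∧ op u v = v) := by
  have hconn : T.Connected := hT.isConnected
  refine ⟨?_, ?_, ?_⟩
  · intro u v
    by_cases h : u = v
    · subst h; rw [hdiag, hdiag]
    · obtain ⟨hadj, _⟩ := hstep u v h
      have hne : op u v ≠ u := fun he => T.irrefl (he ▸ hadj)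
      obtain ⟨_, hd⟩ := hstep (op u v) u hne
      have h1 : T.dist (op u v) u = 1 := SimpleGraph.dist_eq_one_iff_adj.mpr hadj.symm
      rw [h1] at hd
      have : T.dist (op (op u v) u) u = 0 := by omega
      exact hconn.dist_eq_zero_iff.mp this
  · intro u v h
    by_contra hne
    obtain ⟨_, hd1⟩ := hstep u v hne
    by_cases hw : op u v = v
    · rw [hw, hdiag] at h; exact hne h.symm
    · obtain ⟨_, hd2⟩ := hstep (op u v) v hw
      rw [h] at hd2
      omega
  · intro u v
    constructor
    · intro hadj
      have hne := hadj.ne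
      obtain ⟨_, hd⟩ := hstep u v hne
      have h1 : T.dist u v = 1 := SimpleGraph.dist_eq_one_iff_adj.mpr hadj
      rw [h1] at hd
      have : T.dist (op u v) v = 0 := by omega
      exact ⟨hne, hconn.dist_eq_zero_iff.mp this⟩
    · rintro ⟨hne, hv⟩
      have := (hstep u v hne).1
      rwa [hv] at this
end

section
/- Every finite connected simple graph G admits a smooth travel groupoid: there exists a binary operation * on V(G) satisfying (t1), (t2), and (t4), such that E(G) = {{u,v} | u ≠ v, u*v = v}. -/
/-!
Fix a spanning tree `T` of `G` and let `u * v` be the last `G`-neighbour of `u` on the `T`-path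
from `u` to `v` (and `u * u = u`). Then `u * v` is a neighbour of `u`, which gives (t1) and the
edge condition, and the `T`-path from `u * v` to `v` is a tail of the one from `u`, which gives
(t2). For (t4), let `x = u * v = u * w`: the vertex `w * v` lies on the `T`-path from `w` to `v`,
hence on the one from `u` to `v` or on the one from `u` to `w`, and in either case beyond `x`,
since these two paths share their initial segment up to `x`. So the last `G`-neighbour of `u`
before `w * v` is still `x`.
-/

namespace SimpleGraph

namespace IsTree

variable {V : Type*} {T : SimpleGraph V} (hT : T.IsTree) {a b c x y : V}

noncomputable def path (a b : V) : T.Walk a b := (hT.existsUnique_path a b).choose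

lemma path_isPath (a b : V) : (hT.path a b).IsPath := (hT.existsUnique_path a b).choose_spec.1

lemma eq_path {q : T.Walk a b} (hq : q.IsPath) : q = hT.path a b :=
  (hT.existsUnique_path a b).choose_spec.2 q hq

noncomputable def segment (a b : V) : List V := (hT.path a b).support

lemma segment_nodup (a b : V) : (hT.segment a b).Nodup := (hT.path_isPath a b).support_nodup

lemma left_mem_segment (a b : V) : a ∈ hT.segment a b := (hT.path a b).start_mem_support

lemma right_mem_segment (a b : V) : b ∈ hT.segment a b := (hT.path a b).end_mem_support

lemma segment_eq_cons (a b : V) : hT.segment a b = a :: (hT.segment a b).tail :=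
  (hT.path a b).cons_tail_support.symm

lemma segment_self (a : V) : hT.segment a a = [a] := by
  rw [segment, ← hT.eq_path (Walk.IsPath.nil (u := a)), Walk.support_nil]

lemma segment_comm (a b : V) : hT.segment b a = (hT.segment a b).reverse := by
  rw [segment, segment, ← hT.eq_path (hT.path_isPath a b).reverse, Walk.support_reverse]

lemma mem_segment_comm : x ∈ hT.segment a b ↔ x ∈ hT.segment b a := by
  rw [hT.segment_comm a b, List.mem_reverse]

lemma segment_eq_append (hy : y ∈ hT.segment a b) :
    hT.segment a b = hT.segment a y ++ (hT.segment y b).tail := by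
  classical
  have htake := hT.eq_path ((hT.path_isPath a b).takeUntil hy)
  have hdrop := hT.eq_path ((hT.path_isPath a b).dropUntil hy)
  rw [segment, ← (hT.path a b).take_spec hy, Walk.support_append, htake, hdrop]
  rfl

lemma segment_prefix_of_mem (hy : y ∈ hT.segment a b) : hT.segment a y <+: hT.segment a b := by
  rw [hT.segment_eq_append hy]
  exact List.prefix_append _ _

lemma segment_subset_append (c : V) : hT.segment a b ⊆ hT.segment a c ++ hT.segment c b := by
  classical
  intro x hx
  rw [segment, ← hT.eq_path ((hT.path a c).append (hT.path c b)).bypass_isPath] at hx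
  have hx' := Walk.support_bypass_subset_support _ hx
  rw [Walk.support_append, List.mem_append] at hx'
  exact List.mem_append.2 (hx'.imp_right fun h => List.tail_subset _ h)

lemma eq_of_mem_segment_of_mem_segment (hy : y ∈ hT.segment a b) (hxa : x ∈ hT.segment a y)
    (hxb : x ∈ hT.segment y b) : x = y := by
  have hdisj := List.disjoint_of_nodup_append (hT.segment_eq_append hy ▸ hT.segment_nodup a b)
  rw [hT.segment_eq_cons y b, List.mem_cons] at hxb
  exact hxb.resolve_right (hdisj hxa)

lemma mem_segment_or_mem_segment (hx : x ∈ hT.segment a b) (hy : y ∈ hT.segment a b) :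
    x ∈ hT.segment a y ∨ y ∈ hT.segment a x := by
  rcases List.prefix_or_prefix_of_prefix (hT.segment_prefix_of_mem hx)
    (hT.segment_prefix_of_mem hy) with h | h
  · exact Or.inl (h.subset (hT.right_mem_segment a x))
  · exact Or.inr (h.subset (hT.right_mem_segment a y))

/-- On the path from `a` to `b`, `x` lies before the median of `a`, `b`, `c` and `y` after it. -/
lemma mem_segment_of_mem_inter (hxb : x ∈ hT.segment a b) (hxc : x ∈ hT.segment a c)
    (hyb : y ∈ hT.segment a b) (hyc : y ∈ hT.segment c b) : x ∈ hT.segment a y := by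
  rcases hT.mem_segment_or_mem_segment hxb hyb with hxy | hyx
  · exact hxy
  suffices x = y from this ▸ hT.right_mem_segment a y
  have hxcy : x ∈ hT.segment c y := by
    have hyc' := (hT.segment_prefix_of_mem hxc).subset hyx
    rcases hT.mem_segment_or_mem_segment (hT.mem_segment_comm.1 hxc)
      (hT.mem_segment_comm.1 hyc') with h | h
    · exact h
    · obtain rfl := hT.eq_of_mem_segment_of_mem_segment hxc hyx (hT.mem_segment_comm.1 h)
      exact hT.right_mem_segment c y
  have hxyb : x ∈ hT.segment y b := by
    rcases List.mem_append.1 (hT.segment_subset_append y hxb) with h | h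
    · rw [hT.eq_of_mem_segment_of_mem_segment h hyx (hT.right_mem_segment x y)]
      exact hT.left_mem_segment x b
    · exact h
  exact hT.eq_of_mem_segment_of_mem_segment hyc hxcy hxyb

lemma exists_adj_mem_segment (hab : a ≠ b) : ∃ z ∈ hT.segment a b, T.Adj a z := by
  obtain ⟨z, hz, q, hq⟩ := Walk.exists_eq_cons_of_ne hab (hT.path a b)
  refine ⟨z, ?_, hz⟩
  rw [segment, hq, Walk.support_cons]
  exact List.mem_cons_of_mem _ q.start_mem_support

end IsTree

section TravelOp

variable {V : Type*} {G T : SimpleGraph V} [DecidableRel G.Adj] {hT : T.IsTree} {u v w y : V}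

variable (G) in
noncomputable def travelOp (hT : T.IsTree) (u v : V) : V :=
  (((hT.segment u v).filter (G.Adj u ·)).getLast?).getD u

lemma travelOp_self (u : V) : travelOp G hT u u = u := by
  simp [travelOp, IsTree.segment_self]

variable (G hT) in
lemma travelOp_eq_self_or_adj (u v : V) :
    travelOp G hT u v = u ∨ G.Adj u (travelOp G hT u v) := by
  unfold travelOp
  cases h : ((hT.segment u v).filter (G.Adj u ·)).getLast? with
  | none => exact Or.inl rfl
  | some z => exact Or.inr (by simpa using (List.mem_filter.1 (List.mem_of_getLast? h)).2)

variable (G hT) in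
lemma travelOp_mem_segment (u v : V) : travelOp G hT u v ∈ hT.segment u v := by
  unfold travelOp
  cases h : ((hT.segment u v).filter (G.Adj u ·)).getLast? with
  | none => exact hT.left_mem_segment u v
  | some z => exact (List.mem_filter.1 (List.mem_of_getLast? h)).1

lemma adj_travelOp (hle : T ≤ G) (huv : u ≠ v) : G.Adj u (travelOp G hT u v) := by
  obtain ⟨z, hz, hadj⟩ := hT.exists_adj_mem_segment huv
  have hne : (hT.segment u v).filter (G.Adj u ·) ≠ [] :=
    List.ne_nil_of_mem (List.mem_filter.2 ⟨hz, by simpa using hle hadj⟩)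
  rw [travelOp, List.getLast?_eq_some_getLast hne, Option.getD_some]
  simpa using (List.mem_filter.1 (List.getLast_mem hne)).2

lemma travelOp_of_adj (h : G.Adj u v) : travelOp G hT u v = v := by
  rw [travelOp, List.getLast?_filter, ← hT.segment_comm, hT.segment_eq_cons]
  simp [h]

lemma travelOp_of_mem_segment (hy : y ∈ hT.segment u v)
    (hx : travelOp G hT u v ∈ hT.segment u y) : travelOp G hT u y = travelOp G hT u v := by
  have hdisj := List.disjoint_of_nodup_append (hT.segment_eq_append hy ▸ hT.segment_nodup u v)
  by_cases hnil : (hT.segment y v).tail.filter (G.Adj u ·) = []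
  · rw [travelOp, travelOp, hT.segment_eq_append hy, List.filter_append, hnil, List.append_nil]
  · have hlast : travelOp G hT u v = ((hT.segment y v).tail.filter (G.Adj u ·)).getLast hnil := by
      rw [travelOp, hT.segment_eq_append hy, List.filter_append,
        List.getLast?_append_of_ne_nil _ hnil, List.getLast?_eq_some_getLast hnil, Option.getD_some]
    refine (hdisj hx ?_).elim
    rw [hlast]
    exact (List.mem_filter.1 (List.getLast_mem hnil)).1

lemma travelOp_travelOp_left (u v : V) : travelOp G hT (travelOp G hT u v) u = u := by
  rcases travelOp_eq_self_or_adj G hT u v with h | h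
  · rw [h, travelOp_self]
  · exact travelOp_of_adj h.symm

lemma eq_of_travelOp_travelOp_right (hle : T ≤ G) (h : travelOp G hT (travelOp G hT u v) v = u) :
    u = v := by
  by_contra huv
  have hux := travelOp_mem_segment G hT (travelOp G hT u v) v
  rw [h] at hux
  exact (adj_travelOp hle huv).ne <| hT.eq_of_mem_segment_of_mem_segment
    (travelOp_mem_segment G hT u v) (hT.left_mem_segment _ _) hux

lemma travelOp_smooth (h : travelOp G hT u v = travelOp G hT u w) :
    travelOp G hT u (travelOp G hT w v) = travelOp G hT u v := by
  have hxv := travelOp_mem_segment G hT u v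
  have hxw := travelOp_mem_segment G hT u w
  have hyv := travelOp_mem_segment G hT w v
  rcases List.mem_append.1 (hT.segment_subset_append u hyv) with hyw | hyv'
  · rw [hT.mem_segment_comm] at hyw
    rw [h]
    exact travelOp_of_mem_segment hyw
      (hT.mem_segment_of_mem_inter hxw (h ▸ hxv) hyw (hT.mem_segment_comm.1 hyv))
  · exact travelOp_of_mem_segment hyv' (hT.mem_segment_of_mem_inter hxv (h ▸ hxw) hyv' hyv)

lemma adj_iff_travelOp (hle : T ≤ G) : G.Adj u v ↔ u ≠ v ∧ travelOp G hT u v = v :=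
  ⟨fun h => ⟨h.ne, travelOp_of_adj h⟩, fun ⟨huv, h⟩ => h ▸ adj_travelOp hle huv⟩

end TravelOp

end SimpleGraph

open SimpleGraph

theorem exists_smooth_travel_groupoid_general {V : Type*}
    (G : SimpleGraph V) (hconn : G.Connected) :
    ∃ op : V → V → V,
      (∀ u v : V, op (op u v) u = u) ∧
      (∀ u v : V, op (op u v) v = u → u = v) ∧
      (∀ u v w : V, op u v = op u w → op u (op w v) = op u v) ∧
      (∀ u v : V, G.Adj u v ↔ u ≠ v ∧ op u v = v) := by
  classical
  obtain ⟨T, hle, hT⟩ := hconn.exists_isTree_le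
  exact ⟨travelOp G hT, travelOp_travelOp_left, fun _ _ => eq_of_travelOp_travelOp_right hle,
    fun _ _ _ => travelOp_smooth, fun _ _ => adj_iff_travelOp hle⟩

theorem exists_smooth_travel_groupoid {V : Type*} [Fintype V]
    (G : SimpleGraph V) (hconn : G.Connected) :
    ∃ op : V → V → V,
      (∀ u v : V, op (op u v) u = u) ∧
      (∀ u v : V, op (op u v) v = u → u = v) ∧
      (∀ u v w : V, op u v = op u w → op u (op w v) = op u v) ∧
      (∀ u v : V, G.Adj u v ↔ u ≠ v ∧ op u v = v) :=
  exists_smooth_travel_groupoid_general G hconn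
end

section
/- Let (V, *) be a travel groupoid on a graph G with V finite, and suppose (V, *) is non-confusing. Then for all distinct u, v ∈ V, the distance in G from u * v to v is strictly less than the length of the *-walk from u to v; in particular u * v lies on some u-v walk reaching v, so u and v are in the same connected component of G. -/
theorem nonconfusing_dist_lt {V : Type*} [Fintype V]
    (op : V → V → V) (G : SimpleGraph V)
    (t1 : ∀ u v : V, op (op u v) u = u)
    (t2 : ∀ u v : V, op (op u v) v = u → u = v)
    (hG : ∀ u v : V, G.Adj u v ↔ u ≠ v ∧ op u v = v)
    (hnc : ∀ u v : V, u ≠ v → ∀ i : ℕ, 3 ≤ i → iter op u v i ≠ u) :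
    ∀ u v : V, u ≠ v → ∃ k : ℕ, 1 ≤ k ∧ iter op u v k = v ∧
      (∀ m : ℕ, 1 ≤ m → iter op u v m = v → k ≤ m) ∧
      G.dist (op u v) v < k ∧ G.Reachable u v := by
  intro u v huv
  classical
  set a : ℕ → V := iter op u v with ha
  -- fixed point lemma
  have hfix : ∀ x : V, op x v = x → x = v := by
    intro x hx
    apply t2 x v
    rw [hx, hx]
  -- shift lemma
  have hshift : ∀ (x : V) (m n : ℕ),
      iter op x v (m + n) = iter op (iter op x v m) v n := by
    intro x m n
    induction n with
    | zero => rfl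
    | succ n ih => rw [← Nat.add_assoc, iter, ih, iter]
  -- adjacency step
  have hadj : ∀ m : ℕ, a m ≠ v → G.Adj (a m) (a (m + 1)) := by
    intro m hm
    have hne : a (m + 1) ≠ a m := fun h => hm (hfix (a m) h)
    have h2 : G.Adj (a (m + 1)) (a m) := (hG _ _).mpr ⟨hne, t1 (a m) v⟩
    exact h2.symm
  -- the sequence reaches v
  have hreach : ∃ n : ℕ, a (n + 1) = v := by
    obtain ⟨i, j, hij, heq⟩ := Finite.exists_ne_map_eq_of_infinite a
    wlog hlt : i < j generalizing i j
    · exact this j i hij.symm heq.symm (by omega)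
    by_contra hcon
    push_neg at hcon
    have hav : a i ≠ v := by
      intro h
      cases i with
      | zero => exact huv h
      | succ n => exact hcon n h
    have hper : ∀ t : ℕ, iter op (a i) v (t * (j - i)) = a i := by
      intro t
      induction t with
      | zero => rw [Nat.zero_mul]; rfl
      | succ t ih =>
        have hs : iter op (a i) v (t * (j - i) + (j - i)) =
            iter op (iter op (a i) v (t * (j - i))) v (j - i) := hshift _ _ _
        rw [Nat.succ_mul, hs, ih]
        have hs2 := hshift u i (j - i)
        rw [Nat.add_sub_cancel' (le_of_lt hlt)] at hs2
        rw [← hs2]; exact heq.symm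
    have h3 : 3 ≤ 3 * (j - i) := by omega
    exact hnc (a i) v hav (3 * (j - i)) h3 (hper 3)
  -- minimal k
  let k : ℕ := Nat.find hreach + 1
  have hk1 : 1 ≤ k := Nat.le_add_left 1 _
  have hkv : a k = v := Nat.find_spec hreach
  have hmin : ∀ m : ℕ, 1 ≤ m → a m = v → k ≤ m := by
    intro m hm hmv
    obtain ⟨n, rfl⟩ := Nat.exists_eq_add_of_le hm
    have := Nat.find_min' hreach (show a (n + 1) = v by rwa [Nat.add_comm])
    omega
  have hnotv : ∀ l : ℕ, l < k → a l ≠ v := by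
    intro l hl hlv
    cases l with
    | zero => exact huv hlv
    | succ n =>
      have := hmin (n + 1) (Nat.le_add_left 1 n) hlv
      omega
  -- walks
  have hwalk : ∀ d m n : ℕ, m + d = n → (∀ l : ℕ, l < d → a (m + l) ≠ v) →
      ∃ w : G.Walk (a m) (a n), w.length = d := by
    intro d
    induction d with
    | zero =>
      intro m n h _
      have : n = m := by omega
      subst this
      exact ⟨SimpleGraph.Walk.nil, rfl⟩
    | succ d ih =>
      intro m n h hm
      have h0 : a m ≠ v := by simpa using hm 0 (by omega)
      obtain ⟨w, hw⟩ := ih (m + 1) n (by omega) (fun l hl => by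
        have := hm (l + 1) (by omega)
        simpa [Nat.add_assoc, Nat.add_comm 1 l] using this)
      exact ⟨SimpleGraph.Walk.cons (hadj m h0) w, by simp [hw]⟩
  refine ⟨k, hk1, hkv, hmin, ?_, ?_⟩
  · -- dist
    obtain ⟨w, hw⟩ := hwalk (k - 1) 1 k (by omega) (fun l hl => hnotv (1 + l) (by omega))
    have hd : G.dist (a 1) (a k) ≤ k - 1 := by
      have := SimpleGraph.dist_le w
      omega
    have ha1 : a 1 = op u v := rfl
    rw [← ha1, ← hkv]
    omega
  · obtain ⟨w, hw⟩ := hwalk k 0 k (by omega) (fun l hl => by simpa using hnotv l hl)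
    have h0 : a 0 = u := rfl
    rw [← h0, ← hkv]
    exact w.reachable
end

section
/- There exists a travel groupoid that is smooth but not simple. -/
def myop : Fin 4 → Fin 4 → Fin 4 :=
  fun u v => ![![0,1,1,3], ![0,1,2,0], ![1,1,2,3], ![0,2,2,3]] u v

theorem exists_smooth_not_simple :
    ∃ (V : Type) (op : V → V → V),
      (∀ u v : V, op (op u v) u = u) ∧
      (∀ u v : V, op (op u v) v = u → u = v) ∧
      (∀ u v w : V, op u v = op u w → op u (op w v) = op u v) ∧
      ¬(∀ u v : V, op v u ≠ u → op u (op v u) = op u v) := by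
  exact ⟨Fin 4, myop, by decide, by decide, by decide, by decide⟩
end

section
/- In a smooth travel groupoid (V, *) with V finite, for all distinct u, v ∈ V, the sequence u *^0 v, u *^1 v, ..., u *^k v (where k is minimal with u *^k v = v) has pairwise distinct terms. -/
theorem smooth_walk_distinct {V : Type*} [Fintype V] (op : V → V → V)
    (t1 : ∀ u v : V, op (op u v) u = u)
    (t2 : ∀ u v : V, op (op u v) v = u → u = v)
    (t4 : ∀ u v w : V, op u v = op u w → op u (op w v) = op u v) :
    ∀ u v : V, u ≠ v → ∀ k : ℕ, iter op u v k = v →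
      (∀ m < k, iter op u v m ≠ v) →
      ∀ i ≤ k, ∀ j ≤ k, i ≠ j → iter op u v i ≠ iter op u v j := by
  intro u v huv k hk hmin i hi j hj hij h
  wlog hlt : i < j generalizing i j
  · exact this j hj i hi hij.symm h.symm (by omega)
  have step : ∀ t, iter op u v (i + t) = iter op u v (j + t) := by
    intro t
    induction t with
    | zero => simpa using h
    | succ t ih =>
        have e1 : i + (t + 1) = (i + t) + 1 := by omega
        have e2 : j + (t + 1) = (j + t) + 1 := by omega
        rw [e1, e2]
        show op (iter op u v (i + t)) v = op (iter op u v (j + t)) v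
        rw [ih]
  have hv : iter op u v (i + (k - j)) = v := by
    rw [step (k - j)]
    have : j + (k - j) = k := by omega
    rw [this, hk]
  exact hmin (i + (k - j)) (by omega) hv
end
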